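/- arXiv:2501.04426 — 2 statements merged into one kernel-verified Lean document; each statement's English description precedes it below -/
import Mathlib

section
/- Let S and A be finite nonempty types. Let p and q be probability mass functions on S × A that factor as p(s,a) = p_S(s)·π₁(a|s) and q(s,a) = q_S(s)·π₂(a|s), where p_S, q_S are probability mass functions on S and π₁(·|s), π₂(·|s) are probability mass functions on A for each s. Let d_E be a probability mass function on S. Assume p is absolutely continuous with respect to q, and p_S is absolutely continuous with respect to d_E (so for every s with p_S(s) > 0 one has q_S(s) > 0 and d_E(s) > 0). Then D_KL(p_S‖d_E) ≤ −Σ_{s : p_S(s)>0} p_S(s) · log(d_E(s)/q_S(s)) + D_KL(p‖q). -/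
/-- Kullback–Leibler divergence between pmfs on a finite type:
sum over points with `p x > 0` of `p x * log (p x / q x)`. -/
noncomputable def KL {X : Type*} [Fintype X] (p q : X → ℝ) : ℝ :=
  ∑ x, if 0 < p x then p x * Real.log (p x / q x) else 0

lemma KL_nonneg {X : Type*} [Fintype X] (p q : X → ℝ)
    (hp : ∀ x, 0 ≤ p x) (hq : ∀ x, 0 ≤ q x)
    (hpsum : ∑ x, p x = 1) (hqsum : ∑ x, q x = 1)
    (habs : ∀ x, q x = 0 → p x = 0) : 0 ≤ KL p q := by
  have key : ∀ x ∈ Finset.univ, (if 0 < p x then p x - q x else 0) ≤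
      (if 0 < p x then p x * Real.log (p x / q x) else 0) := by
    intro x _
    by_cases h : 0 < p x
    · simp only [if_pos h]
      have hqx : 0 < q x := by
        rcases (hq x).lt_or_eq with h' | h'
        · exact h'
        · exact absurd (habs x h'.symm) (by linarith)
      have h1 : Real.log (q x / p x) ≤ q x / p x - 1 :=
        Real.log_le_sub_one_of_pos (by positivity)
      have h2 : Real.log (p x / q x) = - Real.log (q x / p x) := by
        rw [← Real.log_inv]; congr 1; field_simp
      have h3 : 1 - q x / p x ≤ Real.log (p x / q x) := by rw [h2]; linarith
      have h4 := mul_le_mul_of_nonneg_left h3 h.le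
      have h5 : p x * (1 - q x / p x) = p x - q x := by field_simp
      linarith
    · simp [h]
  have h1 : (∑ x, if 0 < p x then p x - q x else 0) ≤ KL p q :=
    Finset.sum_le_sum key
  have e1 : (∑ x, if 0 < p x then p x - q x else 0)
      = (∑ x, if 0 < p x then p x else 0) - (∑ x, if 0 < p x then q x else 0) := by
    rw [← Finset.sum_sub_distrib]
    exact Finset.sum_congr rfl fun x _ => by by_cases h : 0 < p x <;> simp [h]
  have e2 : (∑ x, if 0 < p x then p x else 0) = 1 := by
    rw [← hpsum]
    refine Finset.sum_congr rfl fun x _ => ?_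
    by_cases h : 0 < p x
    · simp [h]
    · have : p x = 0 := le_antisymm (not_lt.1 h) (hp x)
      simp [h, this]
  have e3 : (∑ x, if 0 < p x then q x else 0) ≤ 1 := by
    rw [← hqsum]
    exact Finset.sum_le_sum fun x _ => by by_cases h : 0 < p x <;> simp [h, hq x]
  linarith

/-- State-only KL estimator (Lemma 1 of the paper):
`D_KL(p_S‖d_E) ≤ -E_{p_S}[log (d_E/q_S)] + D_KL(p‖q)` for joint distributions
`p(s,a) = p_S(s)·π₁(a|s)` and `q(s,a) = q_S(s)·π₂(a|s)`. -/
theorem state_only_kl_estimator {S A : Type*} [Fintype S] [Fintype A] [Nonempty S] [Nonempty A]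
    (pS qS d_E : S → ℝ) (π₁ π₂ : S → A → ℝ)
    (hpS : ∀ s, 0 ≤ pS s) (hpSsum : ∑ s, pS s = 1)
    (hqS : ∀ s, 0 ≤ qS s) (hqSsum : ∑ s, qS s = 1)
    (hdE : ∀ s, 0 ≤ d_E s) (hdEsum : ∑ s, d_E s = 1)
    (hπ₁ : ∀ s a, 0 ≤ π₁ s a) (hπ₁sum : ∀ s, ∑ a, π₁ s a = 1)
    (hπ₂ : ∀ s a, 0 ≤ π₂ s a) (hπ₂sum : ∀ s, ∑ a, π₂ s a = 1)
    (habs : ∀ s a, qS s * π₂ s a = 0 → pS s * π₁ s a = 0)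
    (habsE : ∀ s, 0 < pS s → 0 < d_E s) :
    KL pS d_E
      ≤ -(∑ s, if 0 < pS s then pS s * Real.log (d_E s / qS s) else 0)
        + KL (fun sa : S × A => pS sa.1 * π₁ sa.1 sa.2)
             (fun sa : S × A => qS sa.1 * π₂ sa.1 sa.2) := by
  -- qS is positive on the support of pS
  have hqpos : ∀ s, 0 < pS s → 0 < qS s := by
    intro s hs
    rcases (hqS s).lt_or_eq with h' | h'
    · exact h'
    · exfalso
      have hz : ∀ a, pS s * π₁ s a = 0 := fun a => habs s a (by rw [← h', zero_mul])
      have hsum : ∑ a, pS s * π₁ s a = 0 := Finset.sum_eq_zero fun a _ => hz a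
      rw [← Finset.mul_sum, hπ₁sum s, mul_one] at hsum
      linarith
  -- Step 1: KL pS d_E = -(∑ ...) + KL pS qS
  have step1 : KL pS d_E = -(∑ s, if 0 < pS s then pS s * Real.log (d_E s / qS s) else 0)
      + KL pS qS := by
    unfold KL
    rw [← Finset.sum_neg_distrib, ← Finset.sum_add_distrib]
    refine Finset.sum_congr rfl fun s _ => ?_
    by_cases h : 0 < pS s
    · have hq := hqpos s h
      have hd := habsE s h
      simp only [if_pos h]
      rw [Real.log_div h.ne' hd.ne', Real.log_div hd.ne' hq.ne',
        Real.log_div h.ne' hq.ne']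
      ring
    · simp [h]
  rw [step1]
  have step2 : KL pS qS ≤ KL (fun sa : S × A => pS sa.1 * π₁ sa.1 sa.2)
      (fun sa : S × A => qS sa.1 * π₂ sa.1 sa.2) := by
    unfold KL
    rw [Fintype.sum_prod_type]
    refine Finset.sum_le_sum fun s _ => ?_
    by_cases h : 0 < pS s
    · -- inner sum equals pS s * log(pS/qS) * (∑ π₁ over support) + pS s * KL π₁ π₂ ≥ term
      have hq := hqpos s h
      have habs' : ∀ a, π₂ s a = 0 → π₁ s a = 0 := by
        intro a ha
        have := habs s a (by rw [ha, mul_zero])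
        rcases mul_eq_zero.1 this with h' | h'
        · exact absurd h' h.ne'
        · exact h'
      have key : (∑ a, if 0 < pS s * π₁ s a then
          pS s * π₁ s a * Real.log (pS s * π₁ s a / (qS s * π₂ s a)) else 0)
          = pS s * Real.log (pS s / qS s) +
            pS s * (∑ a, if 0 < π₁ s a then π₁ s a * Real.log (π₁ s a / π₂ s a) else 0) := by
        have hsupp : (∑ a, if 0 < π₁ s a then π₁ s a else 0) = 1 := by
          rw [← hπ₁sum s]
          refine Finset.sum_congr rfl fun a _ => ?_
          by_cases ha : 0 < π₁ s a
          · simp [ha]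
          · have : π₁ s a = 0 := le_antisymm (not_lt.1 ha) (hπ₁ s a)
            simp [ha, this]
        calc (∑ a, if 0 < pS s * π₁ s a then
              pS s * π₁ s a * Real.log (pS s * π₁ s a / (qS s * π₂ s a)) else 0)
            = ∑ a, ((if 0 < π₁ s a then π₁ s a else 0) * (pS s * Real.log (pS s / qS s))
              + pS s * (if 0 < π₁ s a then π₁ s a * Real.log (π₁ s a / π₂ s a) else 0)) := by
              refine Finset.sum_congr rfl fun a _ => ?_
              by_cases ha : 0 < π₁ s a
              · have hπ₂pos : 0 < π₂ s a := by
                  rcases (hπ₂ s a).lt_or_eq with h' | h'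
                  · exact h'
                  · exact absurd (habs' a h'.symm) ha.ne'
                have hcond : 0 < pS s * π₁ s a := mul_pos h ha
                simp only [if_pos ha, if_pos hcond]
                have hrw : pS s * π₁ s a / (qS s * π₂ s a)
                    = pS s / qS s * (π₁ s a / π₂ s a) := by
                  field_simp
                rw [hrw, Real.log_mul (by positivity) (by positivity),
                  Real.log_div h.ne' hq.ne', Real.log_div ha.ne' hπ₂pos.ne']
                ring
              · have : π₁ s a = 0 := le_antisymm (not_lt.1 ha) (hπ₁ s a)
                simp [ha, this]
          _ = (∑ a, (if 0 < π₁ s a then π₁ s a else 0)) * (pS s * Real.log (pS s / qS s))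
              + ∑ a, pS s * (if 0 < π₁ s a then π₁ s a * Real.log (π₁ s a / π₂ s a) else 0) := by
              rw [Finset.sum_add_distrib, Finset.sum_mul]
          _ = pS s * Real.log (pS s / qS s)
              + ∑ a, pS s * (if 0 < π₁ s a then π₁ s a * Real.log (π₁ s a / π₂ s a) else 0) := by
              rw [hsupp, one_mul]
          _ = _ := by rw [← Finset.mul_sum]
      rw [key, if_pos h]
      have hKL : 0 ≤ ∑ a, if 0 < π₁ s a then π₁ s a * Real.log (π₁ s a / π₂ s a) else 0 :=
        KL_nonneg (π₁ s) (π₂ s) (hπ₁ s) (hπ₂ s) (hπ₁sum s) (hπ₂sum s) habs'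
      nlinarith
    · have hps : pS s = 0 := le_antisymm (not_lt.1 h) (hpS s)
      simp [h, hps]
  linarith
end

section
/- Let S and A be finite nonempty types. Let d_i and d_O be probability mass functions on S × A with state marginals d_i^S(s) = Σ_a d_i(s,a) and d_O^S(s) = Σ_a d_O(s,a), and let d_E be a probability mass function on S. Assume d_i is absolutely continuous with respect to d_O, and that d_i^S(s) > 0 implies d_E(s) > 0. Define the optimal state discriminator c*(s) = d_E(s)/(d_E(s)+d_O^S(s)) for states with d_E(s)+d_O^S(s) > 0, and define the importance ratio η(s,a) = d_i(s,a)/d_O(s,a) wherever d_O(s,a) > 0. Then Σ_{s : d_i^S(s)>0} d_i^S(s) · log(d_E(s)/d_O^S(s)) = Σ_{(s,a) : d_O(s,a)>0} d_O(s,a) · η(s,a) · log(c*(s)/(1 − c*(s))). -/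
/-! The optimal discriminator has odds `c*/(1 - c*) = d_E/d_O^S`, and reweighting by `η` turns
`d_O`-expectations into `d_i`-expectations on the support of `d_O`, which carries all of `d_i`;
summing out the action then gives the `d_i^S`-expectation of `log (d_E/d_O^S)`. -/

lemma div_add_div_one_sub_div_add {a b : ℝ} (hab : a + b ≠ 0) :
    a / (a + b) / (1 - a / (a + b)) = a / b := by
  rw [one_sub_div hab, add_sub_cancel_left, div_div_div_cancel_right₀ hab]

lemma ite_pos_mul_of_nonneg {x : ℝ} (hx : 0 ≤ x) (y : ℝ) :
    (if 0 < x then x * y else 0) = x * y := by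
  rcases hx.lt_or_eq with hx | rfl
  · rw [if_pos hx]
  · simp

lemma ite_pos_mul_importance_ratio {p q η f g : ℝ} (hq : 0 ≤ q) (habs : q = 0 → p = 0)
    (hη : 0 < q → η = p / q) (hg : 0 < q → g = f) :
    (if 0 < q then q * η * g else 0) = p * f := by
  rcases hq.lt_or_eq with hq | hq
  · rw [if_pos hq, hη hq, hg hq, mul_div_cancel₀ _ hq.ne']
  · rw [if_neg hq.not_lt, habs hq.symm, zero_mul]

theorem discriminator_log_ratio_estimator_general
    {S A : Type*} [Fintype S] [Fintype A]
    (d_i d_O : S × A → ℝ) (d_E : S → ℝ)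
    (hdi : ∀ sa, 0 ≤ d_i sa)
    (hdO : ∀ sa, 0 ≤ d_O sa)
    (hdE : ∀ s, 0 ≤ d_E s)
    (diS dOS : S → ℝ)
    (hdiS : ∀ s, diS s = ∑ a, d_i (s, a))
    (hdOS : ∀ s, dOS s = ∑ a, d_O (s, a))
    (habs : ∀ sa, d_O sa = 0 → d_i sa = 0)
    (cstar : S → ℝ)
    (hc : ∀ s, 0 < d_E s + dOS s → cstar s = d_E s / (d_E s + dOS s))
    (η : S × A → ℝ)
    (hη : ∀ sa, 0 < d_O sa → η sa = d_i sa / d_O sa) :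
    (∑ s, if 0 < diS s then diS s * Real.log (d_E s / dOS s) else 0)
      = ∑ sa, if 0 < d_O sa then
          d_O sa * η sa * Real.log (cstar sa.1 / (1 - cstar sa.1)) else 0 := by
  have log_odds : ∀ sa, 0 < d_O sa →
      Real.log (cstar sa.1 / (1 - cstar sa.1)) = Real.log (d_E sa.1 / dOS sa.1) := by
    intro sa hpos
    have hOS : 0 < dOS sa.1 := by
      rw [hdOS]
      exact Finset.sum_pos' (fun a _ => hdO _) ⟨sa.2, Finset.mem_univ _, hpos⟩
    have hsum : 0 < d_E sa.1 + dOS sa.1 := by linarith [hdE sa.1]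
    rw [hc _ hsum, div_add_div_one_sub_div_add hsum.ne']
  simp_rw [ite_pos_mul_importance_ratio (hdO _) (habs _) (hη _) (log_odds _),
    fun s => ite_pos_mul_of_nonneg ((hdiS s).symm ▸ Finset.sum_nonneg fun a _ => hdi (s, a)),
    Fintype.sum_prod_type, hdiS, Finset.sum_mul]

/-- Claim 3 of the paper: the expected log density ratio under `d_i` equals the
`d_O`-weighted expectation of the importance ratio times the log-odds of the
optimal state discriminator. -/
theorem discriminator_log_ratio_estimator
    {S A : Type*} [Fintype S] [Fintype A] [Nonempty S] [Nonempty A]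
    (d_i d_O : S × A → ℝ) (d_E : S → ℝ)
    (hdi : ∀ sa, 0 ≤ d_i sa) (hdisum : ∑ sa, d_i sa = 1)
    (hdO : ∀ sa, 0 ≤ d_O sa) (hdOsum : ∑ sa, d_O sa = 1)
    (hdE : ∀ s, 0 ≤ d_E s) (hdEsum : ∑ s, d_E s = 1)
    (diS dOS : S → ℝ)
    (hdiS : ∀ s, diS s = ∑ a, d_i (s, a))
    (hdOS : ∀ s, dOS s = ∑ a, d_O (s, a))
    (habs : ∀ sa, d_O sa = 0 → d_i sa = 0)
    (habsE : ∀ s, 0 < diS s → 0 < d_E s)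
    (cstar : S → ℝ)
    (hc : ∀ s, 0 < d_E s + dOS s → cstar s = d_E s / (d_E s + dOS s))
    (η : S × A → ℝ)
    (hη : ∀ sa, 0 < d_O sa → η sa = d_i sa / d_O sa) :
    (∑ s, if 0 < diS s then diS s * Real.log (d_E s / dOS s) else 0)
      = ∑ sa, if 0 < d_O sa then
          d_O sa * η sa * Real.log (cstar sa.1 / (1 - cstar sa.1)) else 0 :=
  discriminator_log_ratio_estimator_general d_i d_O d_E hdi hdO hdE diS dOS hdiS hdOS habs cstar hc
    η hη
end
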